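/- Let 0 < F < 2 and 0 < H_R < 1 with √H_R + H_R > F, let H be a smooth hydraulic shock profile, and define f₂(x) := −H''(x)/H'(x). Then for every continuously differentiable function w : ℝ → ℝ, not identically zero, such that w and w' are square-integrable on ℝ and (f₂²/4 + f₂'/2)w² is integrable, one has ∫_ℝ [w'(x)² + (f₂(x)²/4 + f₂'(x)/2) w(x)²] dx > 0. That is, the bilinear form B(w,w) := −⟨w',w'⟩ − ⟨w, (f₂²/4 + f₂'/2)w⟩ is negative definite on H¹(ℝ). -/

import Mathlib

open Real Filter MeasureTheory

/-- `ν := 1/√H_R`. -/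
noncomputable def nuOf (HR : ℝ) : ℝ := 1 / Real.sqrt HR

/-- `H₃ := ν² H_R/(ν+1)²`. -/
noncomputable def H3 (HR : ℝ) : ℝ := nuOf HR ^ 2 * HR / (nuOf HR + 1) ^ 2

/-- `H_s := (F ν²/(ν+1))^{2/3} H_R`. -/
noncomputable def Hs (F HR : ℝ) : ℝ := (F * nuOf HR ^ 2 / (nuOf HR + 1)) ^ ((2 : ℝ) / 3) * HR

/-- Right-hand side of the profile ODE. -/
noncomputable def profileRHS (F HR h : ℝ) : ℝ :=
  F ^ 2 * (h - 1) * (h - HR) * (h - H3 HR) /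
    ((h - Hs F HR) * (h ^ 2 + h * Hs F HR + Hs F HR ^ 2))

/-- `f₂ := −H''/H'`. -/
noncomputable def f2 (H : ℝ → ℝ) (x : ℝ) : ℝ := -(deriv (deriv H) x) / deriv H x

/-! ### Auxiliary lemmas -/

lemma limit_eq_zero_atTop {v : ℝ → ℝ} (hv : Integrable v) (hnn : ∀ x, 0 ≤ v x) {L : ℝ}
    (hL : Tendsto v atTop (nhds L)) : L = 0 := by
  by_contra hne
  have hL0 : 0 ≤ L := ge_of_tendsto' hL hnn
  have hLpos : 0 < L := lt_of_le_of_ne hL0 (Ne.symm hne)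
  obtain ⟨a, ha⟩ := eventually_atTop.1 (hL.eventually (eventually_ge_nhds (by linarith : L/2 < L)))
  have hint : Integrable (fun _ : ℝ => L/2) (volume.restrict (Set.Ioi a)) := by
    refine (hv.integrableOn).mono' aestronglyMeasurable_const ?_
    filter_upwards [ae_restrict_mem measurableSet_Ioi] with x hx
    rw [Real.norm_eq_abs, abs_of_pos (by linarith)]
    exact ha x hx.le
  rcases integrable_const_iff.1 hint with h | h
  · linarith
  · have h := h.measure_univ_lt_top; rw [Measure.restrict_apply_univ, Real.volume_Ioi] at h
    exact (lt_irrefl _ h).elim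

lemma limit_eq_zero_atBot {v : ℝ → ℝ} (hv : Integrable v) (hnn : ∀ x, 0 ≤ v x) {L : ℝ}
    (hL : Tendsto v atBot (nhds L)) : L = 0 := by
  by_contra hne
  have hL0 : 0 ≤ L := ge_of_tendsto' hL hnn
  have hLpos : 0 < L := lt_of_le_of_ne hL0 (Ne.symm hne)
  obtain ⟨a, ha⟩ := eventually_atBot.1 (hL.eventually (eventually_ge_nhds (by linarith : L/2 < L)))
  have hint : Integrable (fun _ : ℝ => L/2) (volume.restrict (Set.Iio a)) := by
    refine (hv.integrableOn).mono' aestronglyMeasurable_const ?_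
    filter_upwards [ae_restrict_mem measurableSet_Iio] with x hx
    rw [Real.norm_eq_abs, abs_of_pos (by linarith)]
    exact ha x hx.le
  rcases integrable_const_iff.1 hint with h | h
  · linarith
  · have h := h.measure_univ_lt_top; rw [Measure.restrict_apply_univ, Real.volume_Iio] at h
    exact (lt_irrefl _ h).elim

/-- An `H¹` function on the line tends to zero (squared) at both infinities. -/
lemma sq_tendsto_zero {w : ℝ → ℝ} (hw : ContDiff ℝ 1 w)
    (hw2 : Integrable (fun x => w x ^ 2))
    (hw'2 : Integrable (fun x => deriv w x ^ 2)) :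
    Tendsto (fun x => w x ^ 2) atTop (nhds 0) ∧ Tendsto (fun x => w x ^ 2) atBot (nhds 0) := by
  have hwc : Continuous w := hw.continuous
  have hw'c : Continuous (deriv w) := hw.continuous_deriv le_rfl
  have hwd : ∀ x, HasDerivAt w (deriv w x) x := fun x => (hw.differentiable one_ne_zero x).hasDerivAt
  set g : ℝ → ℝ := fun x => 2 * w x * deriv w x with hgdef
  have hgc : Continuous g := by
    apply ((continuous_const.mul hwc).mul hw'c)
  have hderiv : ∀ x, HasDerivAt (fun y => w y ^ 2) (g x) x := by
    intro x
    simpa using (hwd x).fun_pow 2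
  have hg_int : Integrable g := by
    refine (hw2.add hw'2).mono' hgc.aestronglyMeasurable (ae_of_all _ fun x => ?_)
    simp only [hgdef, Pi.add_apply, Real.norm_eq_abs]
    rw [abs_le]
    constructor
    · nlinarith [sq_nonneg (w x + deriv w x)]
    · nlinarith [sq_nonneg (w x - deriv w x)]
  have hFTC : ∀ x, ∫ t in (0:ℝ)..x, g t = w x ^ 2 - w 0 ^ 2 := fun x =>
    intervalIntegral.integral_eq_sub_of_hasDerivAt (fun t _ => hderiv t)
      (hgc.intervalIntegrable _ _)
  constructor
  · have h1 : Tendsto (fun x => ∫ t in (0:ℝ)..x, g t) atTop (nhds (∫ t in Set.Ioi (0:ℝ), g t)) :=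
      intervalIntegral_tendsto_integral_Ioi 0 hg_int.integrableOn tendsto_id
    have h2 : Tendsto (fun x => w x ^ 2) atTop
        (nhds ((∫ t in Set.Ioi (0:ℝ), g t) + w 0 ^ 2)) := by
      have := h1.add_const (w 0 ^ 2)
      refine this.congr fun x => ?_
      rw [hFTC x]; ring
    have := limit_eq_zero_atTop hw2 (fun x => sq_nonneg _) h2
    rwa [this] at h2
  · have h1 : Tendsto (fun x => ∫ t in x..(0:ℝ), g t) atBot (nhds (∫ t in Set.Iic (0:ℝ), g t)) :=
      intervalIntegral_tendsto_integral_Iic 0 hg_int.integrableOn tendsto_id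
    have h2 : Tendsto (fun x => w x ^ 2) atBot
        (nhds (w 0 ^ 2 - ∫ t in Set.Iic (0:ℝ), g t)) := by
      have := (tendsto_const_nhds (x := w 0 ^ 2) (f := atBot)).sub h1
      refine this.congr fun x => ?_
      rw [intervalIntegral.integral_symm, hFTC x]; ring
    have := limit_eq_zero_atBot hw2 (fun x => sq_nonneg _) h2
    rwa [this] at h2

lemma nu_pos {HR : ℝ} (h0 : 0 < HR) : 0 < nuOf HR := by
  have := Real.sqrt_pos.2 h0
  rw [nuOf]; positivity

lemma nu_sq {HR : ℝ} (h0 : 0 < HR) : nuOf HR ^ 2 = 1 / HR := by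
  rw [nuOf, div_pow, one_pow, Real.sq_sqrt h0.le]

lemma Hs_pos {F HR : ℝ} (hF0 : 0 < F) (h0 : 0 < HR) : 0 < Hs F HR := by
  have hν := nu_pos h0
  have : 0 < F * nuOf HR ^ 2 / (nuOf HR + 1) := by positivity
  rw [Hs]; positivity

lemma Hs_lt {F HR : ℝ} (hF0 : 0 < F) (h0 : 0 < HR) (hdom : Real.sqrt HR + HR > F) :
    Hs F HR < HR := by
  have hs := Real.sqrt_pos.2 h0
  have hss : Real.sqrt HR * Real.sqrt HR = HR := Real.mul_self_sqrt h0.le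
  have hν := nu_pos h0
  have hbase : F * nuOf HR ^ 2 / (nuOf HR + 1) < 1 := by
    rw [div_lt_one (by positivity), nu_sq h0, nuOf]
    rw [div_add' _ _ _ (ne_of_gt hs), lt_div_iff₀ hs, mul_one_div, div_mul_eq_mul_div,
      div_lt_iff₀ h0]
    nlinarith
  have hb0 : 0 ≤ F * nuOf HR ^ 2 / (nuOf HR + 1) := by positivity
  have := Real.rpow_lt_one hb0 hbase (by norm_num : (0:ℝ) < 2/3)
  calc Hs F HR < 1 * HR := by rw [Hs]; exact mul_lt_mul_of_pos_right this h0
  _ = HR := one_mul HR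

lemma H3_lt {HR : ℝ} (h0 : 0 < HR) : H3 HR < HR := by
  have hν := nu_pos h0
  rw [H3, div_lt_iff₀ (by positivity)]
  nlinarith

lemma denom_pos {F HR : ℝ} (hF0 : 0 < F) (h0 : 0 < HR) {h : ℝ} (hh : Hs F HR < h) :
    0 < (h - Hs F HR) * (h ^ 2 + h * Hs F HR + Hs F HR ^ 2) := by
  have h1 := Hs_pos hF0 h0
  have h2 : 0 < h := lt_trans h1 hh
  apply mul_pos (by linarith)
  nlinarith

lemma R_neg {F HR : ℝ} (hF0 : 0 < F) (h0 : 0 < HR) (hdom : Real.sqrt HR + HR > F) {h : ℝ}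
    (hl : HR < h) (hu : h < 1) : profileRHS F HR h < 0 := by
  have hHs := Hs_lt hF0 h0 hdom
  have hH3 := H3_lt h0
  rw [profileRHS]
  apply div_neg_of_neg_of_pos
  · have h1 : (h - 1) * ((h - HR) * (h - H3 HR)) < 0 :=
      mul_neg_of_neg_of_pos (by linarith) (mul_pos (by linarith) (by linarith))
    nlinarith [pow_pos hF0 2]
  · exact denom_pos hF0 h0 (by linarith)

lemma R_contDiffOn {F HR : ℝ} (hF0 : 0 < F) (h0 : 0 < HR) :
    ContDiffOn ℝ (⊤ : ℕ∞) (profileRHS F HR) (Set.Ioi (Hs F HR)) := by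
  apply ContDiffOn.div
  · exact (ContDiff.contDiffOn (by fun_prop))
  · exact (ContDiff.contDiffOn (by fun_prop))
  · intro h hh
    exact ne_of_gt (denom_pos hF0 h0 hh)

/-- Lemma 3.3 (negative definiteness of the whole-line form `B`): for any smooth
hydraulic shock profile and any not-identically-zero `w ∈ H¹(ℝ)` with the displayed
integrability, `∫ (w'² + (f₂²/4 + f₂'/2) w²) > 0`. -/
theorem form_B_negative_definite (F HR : ℝ) (hF0 : 0 < F) (hF2 : F < 2)
    (h0 : 0 < HR) (h1 : HR < 1) (hdom : Real.sqrt HR + HR > F)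
    (H : ℝ → ℝ) (hsm : ContDiff ℝ (⊤ : ℕ∞) H) (hmono : StrictAnti H)
    (hode : ∀ x, deriv H x = profileRHS F HR (H x))
    (hlimL : Tendsto H atBot (nhds 1)) (hlimR : Tendsto H atTop (nhds HR))
    (w : ℝ → ℝ) (hw : ContDiff ℝ 1 w) (hwne : ∃ x, w x ≠ 0)
    (hw2 : Integrable (fun x => w x ^ 2))
    (hw'2 : Integrable (fun x => deriv w x ^ 2))
    (hpot : Integrable (fun x => (f2 H x ^ 2 / 4 + deriv (f2 H) x / 2) * w x ^ 2)) :
    0 < ∫ x, (deriv w x ^ 2 + (f2 H x ^ 2 / 4 + deriv (f2 H) x / 2) * w x ^ 2) := by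
  obtain ⟨hvT, hvB⟩ := sq_tendsto_zero hw hw2 hw'2
  have hwc : Continuous w := hw.continuous
  have hw'c : Continuous (deriv w) := hw.continuous_deriv le_rfl
  have hwd : ∀ x, HasDerivAt w (deriv w x) x := fun x => (hw.differentiable one_ne_zero x).hasDerivAt
  set R : ℝ → ℝ := profileRHS F HR with hRdef
  set U : Set ℝ := Set.Ioi (Hs F HR) with hUdef
  have hUopen : IsOpen U := isOpen_Ioi
  have hHs_lt := Hs_lt hF0 h0 hdom
  have hmem : ∀ x, H x ∈ Set.Ioo HR 1 := by
    intro x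
    constructor
    · have h2 : HR ≤ H (x+1) :=
        le_of_tendsto hlimR ((eventually_ge_atTop (x+1)).mono fun y hy => hmono.antitone hy)
      exact lt_of_le_of_lt h2 (hmono (lt_add_one x))
    · have h2 : H (x-1) ≤ 1 :=
        ge_of_tendsto hlimL ((eventually_le_atBot (x-1)).mono fun y hy => hmono.antitone hy)
      exact lt_of_lt_of_le (hmono (by linarith : x - 1 < x)) h2
  have hHU : ∀ x, H x ∈ U := fun x => lt_trans hHs_lt (hmem x).1
  have hRcd : ContDiffOn ℝ (⊤ : ℕ∞) R U := R_contDiffOn hF0 h0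
  have hRneg : ∀ x, R (H x) < 0 := fun x => R_neg hF0 h0 hdom (hmem x).1 (hmem x).2
  have hH'neg : ∀ x, deriv H x < 0 := fun x => by rw [hode x]; exact hRneg x
  have hH'eq : deriv H = fun x => R (H x) := funext hode
  have hHdA : ∀ x, HasDerivAt H (R (H x)) x := fun x => by
    have := (hsm.differentiable (by simp) x).hasDerivAt; rwa [hode x] at this
  have hRdA : ∀ x, HasDerivAt R (deriv R (H x)) (H x) := fun x =>
    (((hRcd.contDiffAt (hUopen.mem_nhds (hHU x))).differentiableAt (by simp))).hasDerivAt
  have hH'' : ∀ x, HasDerivAt (deriv H) (deriv R (H x) * R (H x)) x := fun x => by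
    rw [hH'eq]; exact (hRdA x).comp x (hHdA x)
  have hf2eq : ∀ x, f2 H x = -deriv R (H x) := by
    intro x
    simp only [f2]
    rw [(hH'' x).deriv, hode x, neg_div, mul_div_assoc,
      div_self (ne_of_lt (hRneg x)), mul_one]
  have hR'cd : ContDiffOn ℝ (⊤ : ℕ∞) (deriv R) U := hRcd.deriv_of_isOpen hUopen (by simp)
  have hf2fun : f2 H = fun x => -deriv R (H x) := funext hf2eq
  have hf2dA : ∀ x, DifferentiableAt ℝ (f2 H) x := by
    intro x
    rw [hf2fun]
    have hd1 : DifferentiableAt ℝ (deriv R) (H x) :=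
      (hR'cd.contDiffAt (hUopen.mem_nhds (hHU x))).differentiableAt (by simp)
    exact (hd1.comp x (hsm.differentiable (by simp) x)).neg
  have hf2d : ∀ x, HasDerivAt (f2 H) (deriv (f2 H) x) x := fun x => (hf2dA x).hasDerivAt
  have hf2cont : Continuous (f2 H) := by
    rw [continuous_iff_continuousAt]; exact fun x => (hf2dA x).continuousAt
  -- bounds on `f2` and `H'`
  have hIccU : Set.Icc HR 1 ⊆ U := fun h hh => lt_of_lt_of_le hHs_lt hh.1
  have hmemIcc : ∀ x, H x ∈ Set.Icc HR 1 := fun x => ⟨(hmem x).1.le, (hmem x).2.le⟩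
  have hIccne : (Set.Icc HR 1).Nonempty := ⟨HR, Set.left_mem_Icc.2 h1.le⟩
  obtain ⟨hM0, -, hM⟩ := isCompact_Icc.exists_isMaxOn hIccne
    ((hR'cd.continuousOn.mono hIccU).abs)
  set M : ℝ := |deriv R hM0| with hMdef
  have hMbd : ∀ x, |f2 H x| ≤ M := fun x => by rw [hf2eq x, abs_neg]; exact hM (hmemIcc x)
  have hMnn : 0 ≤ M := le_trans (abs_nonneg _) (hMbd 0)
  obtain ⟨hK0, -, hK⟩ := isCompact_Icc.exists_isMaxOn hIccne
    ((hRcd.continuousOn.mono hIccU).abs)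
  set K : ℝ := |R hK0| with hKdef
  have hKbd : ∀ x, |deriv H x| ≤ K := fun x => by rw [hode x]; exact hK (hmemIcc x)
  -- integrability facts
  have hww' : Integrable (fun x => w x * deriv w x) := by
    refine (hw2.add hw'2).mono' ((hwc.mul hw'c).aestronglyMeasurable) (ae_of_all _ fun x => ?_)
    simp only [Pi.add_apply, Real.norm_eq_abs]
    rw [abs_le]
    constructor
    · nlinarith [sq_nonneg (w x + deriv w x)]
    · nlinarith [sq_nonneg (w x - deriv w x)]
  have hf2ww' : Integrable (fun x => f2 H x * (w x * deriv w x)) := by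
    refine ((hww'.abs).const_mul M).mono'
      ((hf2cont.mul (hwc.mul hw'c)).aestronglyMeasurable) (ae_of_all _ fun x => ?_)
    rw [Real.norm_eq_abs, abs_mul]
    exact mul_le_mul_of_nonneg_right (hMbd x) (abs_nonneg _)
  have hf2sqw2 : Integrable (fun x => f2 H x ^ 2 * w x ^ 2) := by
    refine (hw2.const_mul (M^2)).mono'
      (((hf2cont.pow 2).mul (hwc.pow 2)).aestronglyMeasurable) (ae_of_all _ fun x => ?_)
    rw [Real.norm_eq_abs, abs_of_nonneg (by positivity)]
    have h3 := abs_le.1 (hMbd x)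
    have h4 : f2 H x ^ 2 ≤ M ^ 2 := sq_le_sq' (by linarith [h3.1]) h3.2
    exact mul_le_mul_of_nonneg_right h4 (sq_nonneg _)
  have hf2'w2 : Integrable (fun x => deriv (f2 H) x * w x ^ 2 / 2) := by
    have e2 : Integrable (fun x => (f2 H x ^ 2 / 4 + deriv (f2 H) x / 2) * w x ^ 2
        - f2 H x ^ 2 * w x ^ 2 / 4) := hpot.sub (hf2sqw2.div_const 4)
    have e3 : (fun x => (f2 H x ^ 2 / 4 + deriv (f2 H) x / 2) * w x ^ 2
        - f2 H x ^ 2 * w x ^ 2 / 4) = fun x => deriv (f2 H) x * w x ^ 2 / 2 := by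
      funext x; ring
    rwa [e3] at e2
  set dG : ℝ → ℝ := fun x => deriv (f2 H) x * w x ^ 2 / 2 + f2 H x * (w x * deriv w x)
    with hdGdef
  have hdGint : Integrable dG := hf2'w2.add hf2ww'
  set G : ℝ → ℝ := fun x => f2 H x * w x ^ 2 / 2 with hGdef
  have hGd : ∀ x, HasDerivAt G (dG x) x := by
    intro x
    have h2 : HasDerivAt (fun y => w y ^ 2 / 2) (w x * deriv w x) x := by
      have h2' : HasDerivAt (fun y => w y ^ 2 / 2) _ x := ((hwd x).fun_pow 2).div_const 2
      convert h2' using 1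
      ring
    have h3 : HasDerivAt (fun y => f2 H y * (w y ^ 2 / 2)) _ x := (hf2d x).fun_mul h2
    have h4 : G = fun y => f2 H y * (w y ^ 2 / 2) := by
      funext y; simp only [hGdef]; ring
    rw [h4]
    convert h3 using 1
    simp only [hdGdef]; ring
  -- limits of G at ±∞
  have hGbd : ∀ x, ‖G x‖ ≤ M / 2 * w x ^ 2 := by
    intro x
    simp only [hGdef, Real.norm_eq_abs]
    rw [abs_div, abs_mul, abs_of_nonneg (sq_nonneg (w x)), show |(2:ℝ)| = 2 by norm_num]
    nlinarith [hMbd x, sq_nonneg (w x), abs_nonneg (f2 H x)]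
  have hGT : Tendsto G atTop (nhds 0) := by
    have h1 : Tendsto (fun x => M / 2 * w x ^ 2) atTop (nhds 0) := by
      simpa using hvT.const_mul (M / 2)
    exact squeeze_zero_norm hGbd h1
  have hGB : Tendsto G atBot (nhds 0) := by
    have h1 : Tendsto (fun x => M / 2 * w x ^ 2) atBot (nhds 0) := by
      simpa using hvB.const_mul (M / 2)
    exact squeeze_zero_norm hGbd h1
  -- the derivative term integrates to zero
  have hint0 : ∫ x, dG x = 0 := by
    have hIoi : ∫ x in Set.Ioi (0:ℝ), dG x = 0 - G 0 :=
      integral_Ioi_of_hasDerivAt_of_tendsto' (fun x _ => hGd x) hdGint.integrableOn hGT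
    have hIic : ∫ x in Set.Iic (0:ℝ), dG x = G 0 - 0 :=
      integral_Iic_of_hasDerivAt_of_tendsto' (fun x _ => hGd x) hdGint.integrableOn hGB
    rw [← intervalIntegral.integral_Iic_add_Ioi hdGint.integrableOn hdGint.integrableOn, hIic, hIoi]
    ring
  -- completing the square
  set s : ℝ → ℝ := fun x => (deriv w x - f2 H x * w x / 2) ^ 2 with hsdef
  have hs_int : Integrable s := by
    have e : Integrable (fun x => deriv w x ^ 2 - f2 H x * (w x * deriv w x)
        + f2 H x ^ 2 * w x ^ 2 / 4) := (hw'2.sub hf2ww').add (hf2sqw2.div_const 4)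
    have e2 : (fun x => deriv w x ^ 2 - f2 H x * (w x * deriv w x)
        + f2 H x ^ 2 * w x ^ 2 / 4) = s := by
      funext x; simp only [hsdef]; ring
    rwa [e2] at e
  have hsplit : (fun x => deriv w x ^ 2 + (f2 H x ^ 2 / 4 + deriv (f2 H) x / 2) * w x ^ 2)
      = fun x => s x + dG x := by
    funext x; simp only [hsdef, hdGdef]; ring
  rw [hsplit, integral_add hs_int hdGint, hint0, add_zero]
  have hs0 : 0 ≤ ∫ x, s x := integral_nonneg fun x => sq_nonneg _
  rcases hs0.lt_or_eq with hposI | heq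
  · exact hposI
  exfalso
  -- s vanishes identically
  have hsae : s =ᵐ[volume] 0 :=
    (integral_eq_zero_iff_of_nonneg (fun x => sq_nonneg _) hs_int).1 heq.symm
  have hscont : Continuous s := by
    have : Continuous (fun x => deriv w x - f2 H x * w x / 2) :=
      hw'c.sub ((hf2cont.mul hwc).div_const 2)
    exact this.pow 2
  have hszero : s = 0 := (hscont.ae_eq_iff_eq volume continuous_const).1 hsae
  have hw'eq : ∀ x, deriv w x = f2 H x * w x / 2 := by
    intro x
    have h2 := congrFun hszero x
    simp only [hsdef, Pi.zero_apply] at h2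
    have h3 := (pow_eq_zero_iff two_ne_zero).1 h2
    linarith [sub_eq_zero.1 h3]
  -- the invariant u = w² H' is constant
  set u : ℝ → ℝ := fun x => w x ^ 2 * deriv H x with hudef
  have hud : ∀ x, HasDerivAt u 0 x := by
    intro x
    have hA : HasDerivAt (fun y => w y ^ 2) (2 * w x * deriv w x) x := by
      simpa using (hwd x).fun_pow 2
    have hB : HasDerivAt (fun y => w y ^ 2 * deriv H y) _ x := hA.fun_mul (hH'' x)
    convert hB using 1
    have hrR : deriv R (H x) = -f2 H x := by rw [hf2eq x]; ring
    rw [hw'eq x, hode x, hrR]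
    ring
  have hconst : ∀ x y, u x = u y :=
    is_const_of_deriv_eq_zero (fun x => (hud x).differentiableAt) (fun x => (hud x).deriv)
  obtain ⟨x₀, hx₀⟩ := hwne
  have hux₀ : u x₀ < 0 :=
    mul_neg_of_pos_of_neg (pow_two_pos_of_ne_zero hx₀) (hH'neg x₀)
  have hubd : ∀ x, ‖u x‖ ≤ K * w x ^ 2 := by
    intro x
    simp only [hudef, Real.norm_eq_abs]
    rw [abs_mul, abs_of_nonneg (sq_nonneg (w x))]
    nlinarith [hKbd x, sq_nonneg (w x), abs_nonneg (deriv H x)]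
  have huT : Tendsto u atTop (nhds 0) := by
    have hk1 : Tendsto (fun x => K * w x ^ 2) atTop (nhds 0) := by
      simpa using hvT.const_mul K
    exact squeeze_zero_norm hubd hk1
  have huc : Tendsto u atTop (nhds (u x₀)) :=
    tendsto_const_nhds.congr (fun x => hconst x₀ x)
  have : u x₀ = 0 := tendsto_nhds_unique huc huT
  linarith
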